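/- arXiv:2007.07850 — 2 statements merged into one kernel-verified Lean document; each statement's English description precedes it below -/
import Mathlib

section
/- If p : [0,t] → [0,1] is measurable with ∫₀ᵗ x·p(x) dx ≤ t, then ∫₀ᵗ p(x) dx ≤ √(2t). -/
/-!
Bathtub principle: among functions with values in `[0,1]` and integral `I` over `[0,t]`, the
first moment is smallest for the indicator of `[0,I]`, where it equals `I² / 2`. Hence
`I² / 2 ≤ t`.
-/

open MeasureTheory Set

theorem intervalIntegrable_of_mem_Icc_zero_one {a b : ℝ} (hab : a ≤ b) {p : ℝ → ℝ}
    (hmeas : AEStronglyMeasurable p (volume.restrict (uIoc a b)))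
    (hp : ∀ x ∈ Icc a b, p x ∈ Icc (0 : ℝ) 1) :
    IntervalIntegrable p volume a b := by
  refine (intervalIntegrable_const (c := (1 : ℝ))).mono_fun' hmeas ?_
  rw [uIoc_of_le hab]
  filter_upwards [ae_restrict_mem measurableSet_Ioc] with x hx
  obtain ⟨h0, h1⟩ := hp x (Ioc_subset_Icc_self hx)
  rwa [Real.norm_of_nonneg h0]

theorem sq_integral_le_two_mul_integral_sub_mul {a b : ℝ} (hab : a ≤ b) {p : ℝ → ℝ}
    (hpi : IntervalIntegrable p volume a b) (hp : ∀ x ∈ Icc a b, p x ∈ Icc (0 : ℝ) 1) :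
    (∫ x in a..b, p x) ^ 2 ≤ 2 * ∫ x in a..b, (x - a) * p x := by
  set I := ∫ x in a..b, p x
  set c := a + I
  have hI0 : 0 ≤ I := intervalIntegral.integral_nonneg hab fun x hx => (hp x hx).1
  have hIle : I ≤ b - a := by
    simpa [hab] using intervalIntegral.integral_mono_on hab hpi intervalIntegrable_const
      fun x hx => (hp x hx).2
  have hac : a ≤ c := by linarith
  have hcb : c ≤ b := by linarith
  have hmul : ∀ d, IntervalIntegrable (fun x => (x - d) * p x) volume a b := fun d =>
    hpi.continuousOn_mul (continuous_id.sub continuous_const).continuousOn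
  have hpac : IntervalIntegrable (fun x => (x - c) * p x) volume a c :=
    (hmul c).mono_set (uIcc_subset_uIcc_left (by rw [uIcc_of_le hab]; exact ⟨hac, hcb⟩))
  have hpcb : IntervalIntegrable (fun x => (x - c) * p x) volume c b :=
    (hmul c).mono_set (uIcc_subset_uIcc_right (by rw [uIcc_of_le hab]; exact ⟨hac, hcb⟩))
  have hshift : ∫ x in a..b, (x - c) * p x = (∫ x in a..b, (x - a) * p x) - I ^ 2 := by
    have : (fun x => (x - c) * p x) = fun x => (x - a) * p x - I * p x := by
      ext x; ring
    rw [this, intervalIntegral.integral_sub (hmul a) (hpi.const_mul I),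
      intervalIntegral.integral_const_mul, sq]
  have hsplit := intervalIntegral.integral_add_adjacent_intervals hpac hpcb
  -- on `[a, c]` the factor `x - c` is nonpositive, so replacing `p` by `1` can only lower it
  have hleft : -(I ^ 2 / 2) ≤ ∫ x in a..c, (x - c) * p x := by
    have hlin : ∫ x in a..c, (x - c) = -(I ^ 2 / 2) := by
      rw [intervalIntegral.integral_sub intervalIntegral.intervalIntegrable_id
        intervalIntegrable_const, integral_id, intervalIntegral.integral_const, smul_eq_mul]
      ring
    rw [← hlin]
    refine intervalIntegral.integral_mono_on hac
      ((continuous_id.sub continuous_const).intervalIntegrable _ _) hpac fun x hx => ?_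
    have hp1 := (hp x ⟨hx.1, hx.2.trans hcb⟩).2
    nlinarith [hx.2]
  have hright : 0 ≤ ∫ x in c..b, (x - c) * p x :=
    intervalIntegral.integral_nonneg hcb fun x hx =>
      mul_nonneg (sub_nonneg.2 hx.1) (hp x ⟨hac.trans hx.1, hx.2⟩).1
  linarith

/-- If `p : [0,t] → [0,1]` is measurable with `∫₀ᵗ x·p(x) dx ≤ t`, then
`∫₀ᵗ p(x) dx ≤ √(2t)`. -/
theorem integral_le_sqrt_two_mul_of_first_moment_le
    (t : ℝ) (ht : 0 < t) (p : ℝ → ℝ) (hmeas : Measurable p)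
    (hp : ∀ x ∈ Set.Icc 0 t, p x ∈ Set.Icc (0 : ℝ) 1)
    (hmoment : ∫ x in (0 : ℝ)..t, x * p x ≤ t) :
    ∫ x in (0 : ℝ)..t, p x ≤ Real.sqrt (2 * t) := by
  have hpi := intervalIntegrable_of_mem_Icc_zero_one ht.le hmeas.aestronglyMeasurable hp
  have hbathtub := sq_integral_le_two_mul_integral_sub_mul ht.le hpi hp
  simp only [sub_zero] at hbathtub
  exact (le_abs_self _).trans (Real.abs_le_sqrt (by linarith))
end

section
/- Let M(t) be the pure-birth Markov process started at M(0)=0 which jumps from state n to n+1 at rate 1/(n+1), i.e., M(t) = max{n : ζₙ ≤ t} with ζₙ = ∑_{j=1}^n j·η_j, η_j i.i.d. standard exponential. Then E[M(t)²] = 2t − E[M(t)] for all t ≥ 0. -/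
open MeasureTheory ProbabilityTheory Set Filter
open scoped ENNReal Topology

/-!
Write `ζₙ = ∑_{j ≤ n} j ηⱼ` for the jump times. The increment `ζₙ₊₁ - ζₙ = (n+1) ηₙ₊₁` is
exponential with mean `n + 1` and independent of `ζₙ`, so by the memoryless property
`E[(t - ζₙ)⁺] = E[(t - ζₙ₊₁)⁺] + (n+1) P(ζₙ₊₁ ≤ t)`. Telescoping from `E[(t - ζ₀)⁺] = t`, and using
`E[(t - ζₙ)⁺] → 0`, gives `∑ₙ (n+1) P(M(t) ≥ n+1) = t`; the left side is `E[M(t)² + M(t)] / 2`.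
-/

/-- The pure-birth (entrance count) process: `M(t) = max{n : ζₙ ≤ t}` where
`ζₙ = ∑_{j=1}^n j·η_j`. -/
noncomputable def entranceCount {Ω : Type*} (η : ℕ → Ω → ℝ) (t : ℝ) (ω : Ω) : ℕ :=
  sSup {n : ℕ | ∑ j ∈ Finset.Icc 1 n, (j : ℝ) * η j ω ≤ t}

section Exponential

variable {r : ℝ}

lemma expMeasure_Iic (hr : 0 < r) (x : ℝ) :
    expMeasure r (Iic x) = ENNReal.ofReal (if 0 ≤ x then 1 - Real.exp (-(r * x)) else 0) := by
  have := isProbabilityMeasure_expMeasure hr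
  rw [← ofReal_cdf, cdf_expMeasure_eq hr]

lemma expMeasure_Iic_zero (hr : 0 < r) : expMeasure r (Iic 0) = 0 := by
  simp [expMeasure_Iic hr]

lemma ae_nonneg_expMeasure (hr : 0 < r) : ∀ᵐ y ∂expMeasure r, 0 ≤ y := by
  rw [ae_iff]
  simp only [not_le]
  exact measure_mono_null Iio_subset_Iic_self (expMeasure_Iic_zero hr)

lemma expMeasure_Ioi (hr : 0 < r) {x : ℝ} (hx : 0 ≤ x) :
    expMeasure r (Ioi x) = ENNReal.ofReal (Real.exp (-(r * x))) := by
  have := isProbabilityMeasure_expMeasure hr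
  rw [← compl_Iic, prob_compl_eq_one_sub measurableSet_Iic, expMeasure_Iic hr, if_pos hx,
    ← ENNReal.ofReal_one, ← ENNReal.ofReal_sub _ (sub_nonneg.2 (Real.exp_le_one_iff.2 (by
      simpa using mul_nonneg hr.le hx)))]
  simp

lemma map_const_mul_expMeasure (hr : 0 < r) {c : ℝ} (hc : 0 < c) :
    (expMeasure r).map (c * ·) = expMeasure (r / c) := by
  have := isProbabilityMeasure_expMeasure hr
  refine Measure.ext_of_Iic _ _ fun x => ?_
  have hpre : (c * ·) ⁻¹' Iic x = Iic (x / c) := by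
    ext y; simp [le_div_iff₀ hc, mul_comm]
  rw [Measure.map_apply (measurable_const_mul c) measurableSet_Iic, hpre,
    expMeasure_Iic hr, expMeasure_Iic (div_pos hr hc)]
  simp only [div_nonneg_iff, hc.le, hc.not_ge, and_true, and_false, or_false]
  field_simp

lemma lintegral_ofReal_min_expMeasure (hr : 0 < r) (b : ℝ) :
    ∫⁻ y, ENNReal.ofReal (min b y) ∂expMeasure r = ENNReal.ofReal r⁻¹ * expMeasure r (Iic b) := by
  rcases le_or_gt b 0 with hb | hb
  · rw [measure_mono_null (Iic_subset_Iic.2 hb) (expMeasure_Iic_zero hr), mul_zero]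
    simp [ENNReal.ofReal_eq_zero.2 hb]
  -- Layer cake: `E[min(b, Y)] = ∫₀ᵇ P(Y > s) ds`, and `r P(Y > s)` is the density of `Y` at `s`.
  have hlevel : ∀ s, expMeasure r {y | s < min b y}
      = (Iio b).indicator (fun s => expMeasure r (Ioi s)) s := by
    intro s
    by_cases hs : s < b
    · simp [hs, indicator_of_mem]; rfl
    · simp [hs]
  have hIic : expMeasure r (Iic b) = ∫⁻ s in Ioc 0 b, exponentialPDF r s := by
    have hdiff : Iic b \ Iic 0 = Ioc 0 b := by ext; simp [and_comm]
    rw [← measure_sdiff_null (expMeasure_Iic_zero hr), hdiff, expMeasure, gammaMeasure,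
      withDensity_apply _ measurableSet_Ioc]
    rfl
  rw [lintegral_eq_lintegral_meas_lt _
    ((ae_nonneg_expMeasure hr).mono fun y hy => le_min hb.le hy) (by fun_prop)]
  simp_rw [hlevel]
  rw [lintegral_indicator measurableSet_Iio, Measure.restrict_restrict measurableSet_Iio,
    Iio_inter_Ioi, setLIntegral_congr Ioo_ae_eq_Ioc, hIic,
    ← lintegral_const_mul' _ _ ENNReal.ofReal_ne_top]
  refine setLIntegral_congr_fun measurableSet_Ioc fun s hs => ?_
  rw [expMeasure_Ioi hr hs.1.le, exponentialPDF_of_nonneg hs.1.le,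
    ← ENNReal.ofReal_mul (by positivity), inv_mul_cancel_left₀ hr.ne']

end Exponential

lemma ENNReal.ofReal_eq_ofReal_sub_add_ofReal_min (a : ℝ) {b : ℝ} (hb : 0 ≤ b) :
    ENNReal.ofReal a = ENNReal.ofReal (a - b) + ENNReal.ofReal (min a b) := by
  rcases le_total a b with hab | hab
  · rw [min_eq_left hab, ENNReal.ofReal_of_nonpos (sub_nonpos.2 hab), zero_add]
  · rw [min_eq_right hab, ← ENNReal.ofReal_add (sub_nonneg.2 hab) hb, sub_add_cancel]

section Memoryless

variable {Ω : Type*} [MeasurableSpace Ω] {μ : Measure Ω} [IsProbabilityMeasure μ] {r : ℝ}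

lemma ProbabilityTheory.IndepFun.lintegral_ofReal_sub_eq_add {X Y : Ω → ℝ}
    (hXY : IndepFun X Y μ) (hX : Measurable X) (hY : Measurable Y) (hr : 0 < r)
    (hYexp : μ.map Y = expMeasure r) (t : ℝ) :
    ∫⁻ ω, ENNReal.ofReal (t - X ω) ∂μ
      = ∫⁻ ω, ENNReal.ofReal (t - (X ω + Y ω)) ∂μ
        + ENNReal.ofReal r⁻¹ * μ {ω | X ω + Y ω ≤ t} := by
  have := isProbabilityMeasure_expMeasure hr
  have hY0 : ∀ᵐ ω ∂μ, 0 ≤ Y ω :=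
    ae_of_ae_map hY.aemeasurable (hYexp ▸ ae_nonneg_expMeasure hr)
  have hpair : μ.map (fun ω => (X ω, Y ω)) = (μ.map X).prod (expMeasure r) := by
    rw [← hYexp]
    exact (indepFun_iff_map_prod_eq_prod_map_map hX.aemeasurable hY.aemeasurable).1 hXY
  have hmin : ∫⁻ ω, ENNReal.ofReal (min (t - X ω) (Y ω)) ∂μ
      = ENNReal.ofReal r⁻¹ * μ {ω | X ω + Y ω ≤ t} := by
    have hS : MeasurableSet {p : ℝ × ℝ | p.1 + p.2 ≤ t} :=
      measurableSet_le (by fun_prop) (by fun_prop)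
    have hprob : μ {ω | X ω + Y ω ≤ t} = ∫⁻ x, expMeasure r (Iic (t - x)) ∂μ.map X := by
      change μ ((fun ω => (X ω, Y ω)) ⁻¹' {p | p.1 + p.2 ≤ t}) = _
      rw [← Measure.map_apply (hX.prodMk hY) hS, hpair, Measure.prod_apply hS]
      congr! with x
      ext y
      simp [le_sub_iff_add_le']
    have hG : Measurable fun p : ℝ × ℝ => ENNReal.ofReal (min (t - p.1) p.2) := by fun_prop
    rw [hprob, ← lintegral_const_mul' _ _ ENNReal.ofReal_ne_top,
      ← lintegral_map hG (hX.prodMk hY), hpair, lintegral_prod _ hG.aemeasurable]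
    exact lintegral_congr fun x => lintegral_ofReal_min_expMeasure hr (t - x)
  rw [← hmin, ← lintegral_add_right' _ (by fun_prop)]
  refine lintegral_congr_ae (hY0.mono fun ω hω => ?_)
  dsimp only
  rw [← sub_sub]
  exact ENNReal.ofReal_eq_ofReal_sub_add_ofReal_min _ hω

end Memoryless

section EntranceCount

variable {Ω : Type*} {η : ℕ → Ω → ℝ}

/-- `entranceCount η t ω` is definitionally `sSup {n | entranceTime η n ω ≤ t}`. -/
noncomputable def entranceTime (η : ℕ → Ω → ℝ) (n : ℕ) (ω : Ω) : ℝ :=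
  ∑ j ∈ Finset.Icc 1 n, (j : ℝ) * η j ω

@[simp]
lemma entranceTime_zero (ω : Ω) : entranceTime η 0 ω = 0 := by
  simp [entranceTime]

lemma entranceTime_succ (n : ℕ) (ω : Ω) :
    entranceTime η (n + 1) ω = entranceTime η n ω + ((n + 1 : ℕ) : ℝ) * η (n + 1) ω :=
  Finset.sum_Icc_succ_top (Nat.le_add_left 1 n) _

lemma entranceTime_mono {ω : Ω} (hη : ∀ j, 0 ≤ η j ω) : Monotone (entranceTime η · ω) :=
  fun _ _ hmn => Finset.sum_le_sum_of_subset_of_nonneg (Finset.Icc_subset_Icc_right hmn)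
    fun j _ _ => mul_nonneg j.cast_nonneg (hη j)

variable [MeasurableSpace Ω] {μ : Measure Ω}

lemma measurable_entranceTime (hmeas : ∀ j, Measurable (η j)) (n : ℕ) :
    Measurable (entranceTime η n) :=
  Finset.measurable_sum _ fun j _ => (hmeas j).const_mul _

lemma ae_nonneg_of_map_eq_expMeasure (hmeas : ∀ j, Measurable (η j))
    (hexp : ∀ j, μ.map (η j) = expMeasure 1) : ∀ᵐ ω ∂μ, ∀ j, 0 ≤ η j ω :=
  ae_all_iff.2 fun j =>
    ae_of_ae_map (hmeas j).aemeasurable ((hexp j) ▸ ae_nonneg_expMeasure one_pos)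

lemma indepFun_entranceTime (hmeas : ∀ j, Measurable (η j)) (hindep : iIndepFun η μ) (n : ℕ) :
    IndepFun (entranceTime η n) (fun ω => ((n + 1 : ℕ) : ℝ) * η (n + 1) ω) μ := by
  have hjumps : iIndepFun (fun (j : ℕ) ω => (j : ℝ) * η j ω) μ :=
    hindep.comp _ fun j => measurable_const_mul (j : ℝ)
  have hsum : entranceTime η n = ∑ j ∈ Finset.Icc 1 n, fun ω => (j : ℝ) * η j ω := by
    ext ω; simp [entranceTime]
  rw [hsum]
  exact hjumps.indepFun_finsetSum_of_notMem (fun j => (hmeas j).const_mul _) (by simp)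

lemma map_jump_eq_expMeasure (hmeas : ∀ j, Measurable (η j))
    (hexp : ∀ j, μ.map (η j) = expMeasure 1) (n : ℕ) :
    μ.map (fun ω => ((n + 1 : ℕ) : ℝ) * η (n + 1) ω) = expMeasure ((n + 1 : ℕ) : ℝ)⁻¹ := by
  rw [← Function.comp_def (((n + 1 : ℕ) : ℝ) * ·), ← Measure.map_map (measurable_const_mul _)
    (hmeas _), hexp, map_const_mul_expMeasure one_pos (by positivity), one_div]

lemma measurable_entranceCount (hmeas : ∀ j, Measurable (η j)) {t : ℝ} (ht : 0 ≤ t) :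
    Measurable (entranceCount η t) := by
  have h : entranceCount η t = fun ω => ⨆ n, if entranceTime η n ω ≤ t then n else 0 := by
    ext ω
    -- On an unbounded set both `sSup` and `⨆` take the junk value `0`.
    refine csSup_eq_csSup_of_forall_exists_le (fun n hn => ⟨n, ⟨n, if_pos hn⟩, le_rfl⟩) ?_
    rintro _ ⟨n, rfl⟩
    dsimp only
    split_ifs with hn
    exacts [⟨n, hn, le_rfl⟩, ⟨0, by simpa using ht, le_rfl⟩]
  rw [h]
  exact Measurable.iSup fun n => Measurable.ite (measurableSet_le
    (measurable_entranceTime hmeas n) measurable_const) measurable_const measurable_const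

variable [IsProbabilityMeasure μ]

lemma lintegral_ofReal_sub_entranceTime_succ (hmeas : ∀ j, Measurable (η j))
    (hindep : iIndepFun η μ) (hexp : ∀ j, μ.map (η j) = expMeasure 1) (t : ℝ) (n : ℕ) :
    ∫⁻ ω, ENNReal.ofReal (t - entranceTime η n ω) ∂μ
      = ∫⁻ ω, ENNReal.ofReal (t - entranceTime η (n + 1) ω) ∂μ
        + ((n + 1 : ℕ) : ℝ≥0∞) * μ {ω | entranceTime η (n + 1) ω ≤ t} := by
  simp_rw [entranceTime_succ]
  rw [(indepFun_entranceTime hmeas hindep n).lintegral_ofReal_sub_eq_add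
    (measurable_entranceTime hmeas n) (by fun_prop) (by positivity)
    (map_jump_eq_expMeasure hmeas hexp n), inv_inv, ENNReal.ofReal_natCast]

lemma lintegral_ofReal_sub_entranceTime_add_sum (hmeas : ∀ j, Measurable (η j))
    (hindep : iIndepFun η μ) (hexp : ∀ j, μ.map (η j) = expMeasure 1) (t : ℝ) (N : ℕ) :
    ∫⁻ ω, ENNReal.ofReal (t - entranceTime η N ω) ∂μ
      + ∑ n ∈ Finset.range N, ((n + 1 : ℕ) : ℝ≥0∞) * μ {ω | entranceTime η (n + 1) ω ≤ t}
      = ENNReal.ofReal t := by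
  induction N with
  | zero => simp
  | succ N ih =>
    rw [← ih, lintegral_ofReal_sub_entranceTime_succ hmeas hindep hexp t N, Finset.sum_range_succ]
    ring

lemma tsum_mul_measure_entranceTime_le (hmeas : ∀ j, Measurable (η j))
    (hindep : iIndepFun η μ) (hexp : ∀ j, μ.map (η j) = expMeasure 1) (t : ℝ) :
    ∑' n, ((n + 1 : ℕ) : ℝ≥0∞) * μ {ω | entranceTime η (n + 1) ω ≤ t} ≤ ENNReal.ofReal t :=
  ENNReal.tsum_le_of_sum_range_le fun N =>
    (le_add_self).trans (lintegral_ofReal_sub_entranceTime_add_sum hmeas hindep hexp t N).le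

lemma ae_exists_lt_entranceTime (hmeas : ∀ j, Measurable (η j))
    (hindep : iIndepFun η μ) (hexp : ∀ j, μ.map (η j) = expMeasure 1) (t : ℝ) :
    ∀ᵐ ω ∂μ, ∃ n, t < entranceTime η n ω := by
  have hfin : ∑' n, μ {ω | entranceTime η (n + 1) ω ≤ t} ≠ ∞ :=
    ne_top_of_le_ne_top ENNReal.ofReal_ne_top <| le_trans
      (ENNReal.tsum_le_tsum fun n => le_mul_of_one_le_left' (by simp))
      (tsum_mul_measure_entranceTime_le hmeas hindep hexp t)
  filter_upwards [ae_eventually_notMem hfin] with ω hω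
  obtain ⟨n, hn⟩ := hω.exists
  exact ⟨n + 1, not_le.1 hn⟩

lemma tsum_mul_measure_entranceTime (hmeas : ∀ j, Measurable (η j))
    (hindep : iIndepFun η μ) (hexp : ∀ j, μ.map (η j) = expMeasure 1) (t : ℝ) :
    ∑' n, ((n + 1 : ℕ) : ℝ≥0∞) * μ {ω | entranceTime η (n + 1) ω ≤ t} = ENNReal.ofReal t := by
  have hvanish :
      Tendsto (fun N => ∫⁻ ω, ENNReal.ofReal (t - entranceTime η N ω) ∂μ) atTop (𝓝 0) := by
    rw [← lintegral_zero]
    refine tendsto_lintegral_of_dominated_convergence (fun _ => ENNReal.ofReal t)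
      (fun N => ((measurable_entranceTime hmeas N).const_sub t).ennreal_ofReal)
      (fun N => (ae_nonneg_of_map_eq_expMeasure hmeas hexp).mono fun ω hη =>
        ENNReal.ofReal_le_ofReal ?_) (by simp) ?_
    · linarith [entranceTime_mono hη N.zero_le, entranceTime_zero (η := η) ω]
    filter_upwards [ae_nonneg_of_map_eq_expMeasure hmeas hexp,
      ae_exists_lt_entranceTime hmeas hindep hexp t] with ω hη ⟨N, hN⟩
    refine tendsto_const_nhds.congr' (eventually_atTop.2 ⟨N, fun n hn => ?_⟩)
    exact (ENNReal.ofReal_of_nonpos (by linarith [entranceTime_mono hη hn])).symm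
  have hlim := hvanish.add (ENNReal.tendsto_nat_tsum fun n =>
    ((n + 1 : ℕ) : ℝ≥0∞) * μ {ω | entranceTime η (n + 1) ω ≤ t})
  simp_rw [lintegral_ofReal_sub_entranceTime_add_sum hmeas hindep hexp, zero_add] at hlim
  exact tendsto_nhds_unique tendsto_const_nhds hlim |>.symm

lemma ae_le_entranceCount_iff (hmeas : ∀ j, Measurable (η j))
    (hindep : iIndepFun η μ) (hexp : ∀ j, μ.map (η j) = expMeasure 1) {t : ℝ} (ht : 0 ≤ t) :
    ∀ᵐ ω ∂μ, ∀ n, n ≤ entranceCount η t ω ↔ entranceTime η n ω ≤ t := by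
  filter_upwards [ae_nonneg_of_map_eq_expMeasure hmeas hexp,
    ae_exists_lt_entranceTime hmeas hindep hexp t] with ω hη ⟨N, hN⟩
  have hbdd : BddAbove {n | entranceTime η n ω ≤ t} :=
    ⟨N, fun n hn => not_lt.1 fun hNn => hN.not_ge ((entranceTime_mono hη hNn.le).trans hn)⟩
  have hmem : entranceCount η t ω ∈ {n | entranceTime η n ω ≤ t} :=
    Nat.sSup_mem ⟨0, by simpa using ht⟩ hbdd
  exact fun n => ⟨fun hn => (entranceTime_mono hη hn).trans hmem, fun hn => le_csSup hbdd hn⟩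

end EntranceCount

section NatValued

variable {Ω : Type*} [MeasurableSpace Ω] {μ : Measure Ω}

lemma two_mul_sum_range_add_one (m : ℕ) : 2 * ∑ n ∈ Finset.range m, (n + 1) = m ^ 2 + m := by
  induction m with
  | zero => simp
  | succ m ih => rw [Finset.sum_range_succ, mul_add, ih]; ring

lemma lintegral_sq_add_self_eq_tsum {N : Ω → ℕ} (hN : Measurable N) :
    ∫⁻ ω, ((N ω ^ 2 + N ω : ℕ) : ℝ≥0∞) ∂μ
      = 2 * ∑' n, ((n + 1 : ℕ) : ℝ≥0∞) * μ {ω | n < N ω} := by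
  have hlevel : ∀ n, MeasurableSet {ω | n < N ω} := fun n => hN measurableSet_Ioi
  have hpt : ∀ ω, ((N ω ^ 2 + N ω : ℕ) : ℝ≥0∞)
      = 2 * ∑' n, ((n + 1 : ℕ) : ℝ≥0∞) * {ω | n < N ω}.indicator 1 ω := by
    intro ω
    rw [tsum_eq_sum (s := Finset.range (N ω)) fun n hn => by simp_all]
    rw [Finset.sum_congr rfl (g := fun n => ((n + 1 : ℕ) : ℝ≥0∞)) fun n hn => by
      simp [Finset.mem_range.1 hn]]
    exact_mod_cast (two_mul_sum_range_add_one (N ω)).symm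
  have hind : ∀ n, Measurable ({ω | n < N ω}.indicator (1 : Ω → ℝ≥0∞)) :=
    fun n => measurable_one.indicator (hlevel n)
  simp_rw [hpt]
  rw [lintegral_const_mul _ (Measurable.tsum fun n => (hind n).const_mul _),
    lintegral_tsum fun n => ((hind n).const_mul _).aemeasurable]
  congr 1
  refine tsum_congr fun n => ?_
  rw [lintegral_const_mul _ (hind n), lintegral_indicator_one (hlevel n)]

lemma integral_sq_add_integral_eq_toReal_lintegral {N : Ω → ℕ} (hN : Measurable N)
    (hfin : ∫⁻ ω, ((N ω ^ 2 + N ω : ℕ) : ℝ≥0∞) ∂μ ≠ ∞) :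
    ∫ ω, (N ω : ℝ) ^ 2 ∂μ + ∫ ω, (N ω : ℝ) ∂μ
      = (∫⁻ ω, ((N ω ^ 2 + N ω : ℕ) : ℝ≥0∞) ∂μ).toReal := by
  have hsum : Integrable (fun ω => ((N ω ^ 2 + N ω : ℕ) : ℝ)) μ := by
    simpa only [ENNReal.toReal_natCast] using
      integrable_toReal_of_lintegral_ne_top (by fun_prop) hfin
  have hsq : Integrable (fun ω => (N ω : ℝ) ^ 2) μ :=
    hsum.mono' (by fun_prop) (ae_of_all _ fun ω => by simp)
  have hlin : Integrable (fun ω => (N ω : ℝ)) μ :=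
    hsum.mono' (by fun_prop) (ae_of_all _ fun ω => by simp)
  rw [← integral_add hsq hlin, ← integral_toReal (by fun_prop) (ae_of_all _ fun ω => by simp)]
  simp only [ENNReal.toReal_natCast]
  push_cast
  rfl

end NatValued

/-- For the pure-birth process `M(t)` with jump rate `1/(n+1)` from state `n` and
`M(0) = 0` (realized as `M(t) = max{n : ζₙ ≤ t}` with `ζₙ = ∑_{j=1}^n j·η_j`,
`η_j` i.i.d. standard exponentials), `E[M(t)²] = 2t − E[M(t)]` for all `t ≥ 0`. -/
theorem second_moment_of_entrance_count
    {Ω : Type*} [MeasurableSpace Ω] (μ : Measure Ω) [IsProbabilityMeasure μ]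
    (η : ℕ → Ω → ℝ) (hmeas : ∀ j, Measurable (η j))
    (hindep : iIndepFun η μ)
    (hexp : ∀ j, Measure.map (η j) μ = expMeasure 1)
    (t : ℝ) (ht : 0 ≤ t) :
    (∫ ω, ((entranceCount η t ω : ℝ)) ^ 2 ∂μ)
      = 2 * t - ∫ ω, (entranceCount η t ω : ℝ) ∂μ := by
  have hM := measurable_entranceCount hmeas ht
  have hlevel : ∀ n, μ {ω | n < entranceCount η t ω} = μ {ω | entranceTime η (n + 1) ω ≤ t} :=
    fun n => measure_congr <|
      (ae_le_entranceCount_iff hmeas hindep hexp ht).mono fun ω h => propext (h (n + 1))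
  have hmoment : ∫⁻ ω, ((entranceCount η t ω ^ 2 + entranceCount η t ω : ℕ) : ℝ≥0∞) ∂μ
      = ENNReal.ofReal (2 * t) := by
    rw [lintegral_sq_add_self_eq_tsum hM]
    simp_rw [hlevel]
    rw [tsum_mul_measure_entranceTime hmeas hindep hexp, ENNReal.ofReal_mul zero_le_two,
      ENNReal.ofReal_ofNat]
  have hsum := integral_sq_add_integral_eq_toReal_lintegral hM (hmoment ▸ ENNReal.ofReal_ne_top)
  rw [hmoment, ENNReal.toReal_ofReal (by positivity)] at hsum
  linarith
end
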